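/- There exists an absolute constant C > 0 with the following property. Let ε > 0 and let b, b' : [0,∞) → ℝ² be trajectories of the centers of two unit discs, each continuous, piecewise linear and Lipschitz with constant 1, satisfying |b(s) − b'(s)| ≥ 2 for all s ≥ 0. Let w1 = (−√3/2, 1/2) and u1 = (1/2, √3/2), and assume |u1·b(0)| ≤ ε and |u1·b'(0)| ≤ ε, and that w1·(b'(0) − b(0)) − 2 ≤ ε. Suppose the two discs collide elastically at time εt for some t ≥ 0, i.e., |b(εt) − b'(εt)| = 2 and, with x = b(εt) − b'(εt), the right derivatives satisfy Db(εt) = Db(εt−) − (1/4)(D(b − b')(εt−)·x)·x and Db'(εt) = Db'(εt−) + (1/4)(D(b − b')(εt−)·x)·x. Then |w1·Db(εt) − w1·Db'(εt−)| ≤ C·ε·(1+t) and |w1·Db'(εt) − w1·Db(εt−)| ≤ C·ε·(1+t); that is, at the collision the w1-components of the two velocities are exchanged up to an error of order ε(1+t). -/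

import Mathlib

/-!
At the collision `x = b - b'` has length `2`, and the collision law turns the incoming relative
velocity `d = Db(εt−) - Db'(εt−)` into its reflection across `xᗮ`. Both quantities to be
estimated are `± ⟪d, r⟫`, where `r` is the component of `w1` orthogonal to `x`; since `r ⊥ x`,
this equals `± ⟪Db - Db', r⟫`, which is at most `2 ‖r‖` in absolute value. In the plane
`‖r‖ = |⟪u1, x⟫| / 2`, and `⟪u1, x⟫` is at most `ε` initially for each disc and drifts by at
most the elapsed time `ε t`.
-/

open scoped RealInnerProductSpace

noncomputable section

/-- The unit vector `w1 = (-√3/2, 1/2)`. -/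
def w1 : EuclideanSpace ℝ (Fin 2) :=
  (EuclideanSpace.equiv (Fin 2) ℝ).symm ![-(Real.sqrt 3 / 2), 1 / 2]

/-- The unit vector `u1 = (1/2, √3/2)`. -/
def u1 : EuclideanSpace ℝ (Fin 2) :=
  (EuclideanSpace.equiv (Fin 2) ℝ).symm ![1 / 2, Real.sqrt 3 / 2]

section Collision

variable {E : Type*} [NormedAddCommGroup E] [InnerProductSpace ℝ E]

theorem norm_le_of_lipschitzOnWith_of_eqOn_Icc {K : NNReal} {b : ℝ → E} {v : E} {a T : ℝ}
    (hb : LipschitzOnWith K b (Set.Ici a)) (hT : a ≤ T)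
    (hlin : ∃ η > 0, ∀ s ∈ Set.Icc T (T + η), b s = b T + (s - T) • v) : ‖v‖ ≤ K := by
  obtain ⟨η, hη, hlin⟩ := hlin
  have hd := hb.dist_le_mul (T + η) (by simp only [Set.mem_Ici]; linarith) T hT
  rw [dist_eq_norm, hlin (T + η) ⟨by linarith, le_rfl⟩, add_sub_cancel_left, add_sub_cancel_left,
    norm_smul, Real.dist_eq, add_sub_cancel_left, Real.norm_eq_abs, abs_of_pos hη] at hd
  nlinarith

theorem abs_inner_sub_le_of_lipschitzOnWith {K : NNReal} {s : Set ℝ} {b : ℝ → E} {u : E}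
    {t₀ t₁ : ℝ} (hb : LipschitzOnWith K b s) (ht₀ : t₀ ∈ s) (ht₁ : t₁ ∈ s) (hu : ‖u‖ = 1) :
    |⟪u, b t₁⟫ - ⟪u, b t₀⟫| ≤ K * |t₁ - t₀| := by
  calc |⟪u, b t₁⟫ - ⟪u, b t₀⟫| = |⟪u, b t₁ - b t₀⟫| := by rw [inner_sub_right]
    _ ≤ ‖u‖ * ‖b t₁ - b t₀‖ := abs_real_inner_le_norm _ _
    _ ≤ K * |t₁ - t₀| := by
      rw [hu, one_mul, ← dist_eq_norm, ← Real.dist_eq]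
      exact hb.dist_le_mul t₁ ht₁ t₀ ht₀

variable {x w w' v v' : E}

theorem inner_sub_smul_self_eq_zero (a : E) (hx : ‖x‖ = 2) :
    ⟪x, a - (4⁻¹ * ⟪a, x⟫) • x⟫ = 0 := by
  rw [inner_sub_right, real_inner_smul_right, real_inner_self_eq_norm_sq, hx, real_inner_comm]
  ring

theorem norm_sub_smul_sq (a : E) (hx : ‖x‖ = 2) :
    ‖a - (4⁻¹ * ⟪a, x⟫) • x‖ ^ 2 = ‖a‖ ^ 2 - ⟪a, x⟫ ^ 2 / 4 := by
  have hxx : ⟪x, x⟫ = 4 := by rw [real_inner_self_eq_norm_sq, hx]; norm_num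
  rw [← real_inner_self_eq_norm_sq, ← real_inner_self_eq_norm_sq]
  simp only [inner_sub_left, inner_sub_right, real_inner_smul_left, real_inner_smul_right, hxx,
    real_inner_comm a x]
  ring

section Elastic

variable (hx : ‖x‖ = 2)
  (hv : v = w - (4⁻¹ * ⟪w - w', x⟫) • x) (hv' : v' = w' + (4⁻¹ * ⟪w - w', x⟫) • x)
include hx hv hv'

theorem inner_sub_inner_eq_of_elastic (a : E) :
    ⟪a, v⟫ - ⟪a, w'⟫ = ⟪v - v', a - (4⁻¹ * ⟪a, x⟫) • x⟫ := by
  have hperp := inner_sub_smul_self_eq_zero a hx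
  have hrel : v - v' = (w - w') - (2⁻¹ * ⟪w - w', x⟫) • x := by rw [hv, hv']; module
  rw [hrel, inner_sub_left, real_inner_smul_left, hperp, hv]
  simp only [inner_sub_left, inner_sub_right, real_inner_smul_right, real_inner_comm a]
  ring

theorem inner_sub_inner_eq_neg_of_elastic (a : E) :
    ⟪a, v'⟫ - ⟪a, w⟫ = -⟪v - v', a - (4⁻¹ * ⟪a, x⟫) • x⟫ := by
  rw [← inner_sub_inner_eq_of_elastic hx hv hv', hv, hv']
  simp only [inner_add_right, inner_sub_right]
  ring

theorem abs_inner_sub_inner_le_of_elastic (hvn : ‖v‖ ≤ 1) (hvn' : ‖v'‖ ≤ 1) (a : E) :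
    |⟪a, v⟫ - ⟪a, w'⟫| ≤ 2 * ‖a - (4⁻¹ * ⟪a, x⟫) • x‖ ∧
      |⟪a, v'⟫ - ⟪a, w⟫| ≤ 2 * ‖a - (4⁻¹ * ⟪a, x⟫) • x‖ := by
  have hbound : |⟪v - v', a - (4⁻¹ * ⟪a, x⟫) • x⟫| ≤ 2 * ‖a - (4⁻¹ * ⟪a, x⟫) • x‖ :=
    calc _ ≤ ‖v - v'‖ * ‖a - (4⁻¹ * ⟪a, x⟫) • x‖ := abs_real_inner_le_norm _ _
      _ ≤ 2 * ‖a - (4⁻¹ * ⟪a, x⟫) • x‖ := by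
        gcongr
        linarith [norm_sub_le v v']
  rw [inner_sub_inner_eq_of_elastic hx hv hv', inner_sub_inner_eq_neg_of_elastic hx hv hv',
    abs_neg]
  exact ⟨hbound, hbound⟩

end Elastic

end Collision

theorem inner_w1_sq_add_inner_u1_sq (y : EuclideanSpace ℝ (Fin 2)) :
    ⟪w1, y⟫ ^ 2 + ⟪u1, y⟫ ^ 2 = ‖y‖ ^ 2 := by
  simp [w1, u1, PiLp.inner_apply, Fin.sum_univ_two, EuclideanSpace.norm_sq_eq]
  nlinarith [Real.sq_sqrt (by norm_num : (0 : ℝ) ≤ 3)]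

theorem norm_w1 : ‖w1‖ = 1 := by
  simp [w1, EuclideanSpace.norm_eq, Fin.sum_univ_two]
  nlinarith [Real.sq_sqrt (by norm_num : (0 : ℝ) ≤ 3)]

theorem norm_u1 : ‖u1‖ = 1 := by
  simp [u1, EuclideanSpace.norm_eq, Fin.sum_univ_two]
  nlinarith [Real.sq_sqrt (by norm_num : (0 : ℝ) ≤ 3)]

theorem norm_w1_sub_smul {x : EuclideanSpace ℝ (Fin 2)} (hx : ‖x‖ = 2) :
    ‖w1 - (4⁻¹ * ⟪w1, x⟫) • x‖ = |⟪u1, x⟫| / 2 := by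
  have hsq : ‖w1 - (4⁻¹ * ⟪w1, x⟫) • x‖ ^ 2 = (|⟪u1, x⟫| / 2) ^ 2 := by
    rw [norm_sub_smul_sq w1 hx, norm_w1, div_pow, sq_abs]
    have hplane := inner_w1_sq_add_inner_u1_sq x
    rw [hx] at hplane
    linarith
  exact (pow_left_inj₀ (norm_nonneg _) (by positivity) two_ne_zero).1 hsq

/-- There is an absolute constant `C > 0` such that whenever two unit
discs with `1`-Lipschitz, continuous piecewise linear center trajectories `b, b'` on
`[0,∞)` (with right derivatives `vb, vb'` and left derivatives -- left limits of the
right derivatives -- `wb, wb'`), whose `u1`-components are initially at most `ε` in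
absolute value and whose initial `w1`-gap is at most `ε`, collide elastically at a time
`ε t` with `t ≥ 0`, the `w1`-components of the velocities are exchanged at the collision
up to an error of at most `C ε (1+t)`. -/
theorem velocities_exchanged_up_to_error :
    ∃ C : ℝ, 0 < C ∧ ∀ ε : ℝ, 0 < ε →
      ∀ b b' vb vb' wb wb' : ℝ → EuclideanSpace ℝ (Fin 2),
      -- continuity and piecewise linearity on `[0,∞)`, with one-sided derivatives
      (ContinuousOn b (Set.Ici 0)) → (ContinuousOn b' (Set.Ici 0)) →
      (∀ t : ℝ, 0 ≤ t → ∃ η > 0, ∀ s ∈ Set.Icc t (t + η),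
        b s = b t + (s - t) • vb t) →
      (∀ t : ℝ, 0 ≤ t → ∃ η > 0, ∀ s ∈ Set.Icc (t - η) t ∩ Set.Ici 0,
        b s = b t + (s - t) • wb t) →
      (∀ t : ℝ, 0 ≤ t → ∃ η > 0, ∀ s ∈ Set.Icc t (t + η),
        b' s = b' t + (s - t) • vb' t) →
      (∀ t : ℝ, 0 ≤ t → ∃ η > 0, ∀ s ∈ Set.Icc (t - η) t ∩ Set.Ici 0,
        b' s = b' t + (s - t) • wb' t) →
      -- `1`-Lipschitz trajectories of non-overlapping unit discs
      LipschitzOnWith 1 b (Set.Ici 0) → LipschitzOnWith 1 b' (Set.Ici 0) →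
      (∀ s : ℝ, 0 ≤ s → 2 ≤ ‖b s - b' s‖) →
      -- initial conditions
      |⟪u1, b 0⟫| ≤ ε → |⟪u1, b' 0⟫| ≤ ε → ⟪w1, b' 0 - b 0⟫ - 2 ≤ ε →
      -- elastic collision at time `ε t`
      ∀ t : ℝ, 0 ≤ t → ‖b (ε * t) - b' (ε * t)‖ = 2 →
      vb (ε * t) = wb (ε * t) -
        ((4⁻¹ : ℝ) * ⟪wb (ε * t) - wb' (ε * t), b (ε * t) - b' (ε * t)⟫) •
          (b (ε * t) - b' (ε * t)) →
      vb' (ε * t) = wb' (ε * t) +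
        ((4⁻¹ : ℝ) * ⟪wb (ε * t) - wb' (ε * t), b (ε * t) - b' (ε * t)⟫) •
          (b (ε * t) - b' (ε * t)) →
      -- conclusion: the `w1`-components of the velocities are exchanged up to
      -- an error of order `ε (1 + t)`
      |⟪w1, vb (ε * t)⟫ - ⟪w1, wb' (ε * t)⟫| ≤ C * ε * (1 + t) ∧
      |⟪w1, vb' (ε * t)⟫ - ⟪w1, wb (ε * t)⟫| ≤ C * ε * (1 + t) := by
  refine ⟨2, two_pos, ?_⟩
  intro ε hε b b' vb vb' wb wb' _ _ hbr _ hbr' _ hb hb' _ hu hu' _ t ht hcol hv hv'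
  have hT : (0 : ℝ) ≤ ε * t := mul_nonneg hε.le ht
  have hdrift : ∀ {c : ℝ → EuclideanSpace ℝ (Fin 2)}, LipschitzOnWith 1 c (Set.Ici 0) →
      |⟪u1, c (ε * t)⟫ - ⟪u1, c 0⟫| ≤ ε * t := fun hc => by
    simpa [abs_of_nonneg hT] using
      abs_inner_sub_le_of_lipschitzOnWith hc Set.self_mem_Ici (Set.mem_Ici.2 hT) norm_u1
  have hu_gap : |⟪u1, b (ε * t) - b' (ε * t)⟫| ≤ 2 * ε * (1 + t) := by
    have h₁ := abs_le.1 (hdrift hb)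
    have h₂ := abs_le.1 (hdrift hb')
    have h₃ := abs_le.1 hu
    have h₄ := abs_le.1 hu'
    rw [inner_sub_right, abs_le]
    constructor <;> linarith
  obtain ⟨hexch, hexch'⟩ := abs_inner_sub_inner_le_of_elastic hcol hv hv'
    (by exact_mod_cast norm_le_of_lipschitzOnWith_of_eqOn_Icc hb hT (hbr _ hT))
    (by exact_mod_cast norm_le_of_lipschitzOnWith_of_eqOn_Icc hb' hT (hbr' _ hT)) w1
  rw [norm_w1_sub_smul hcol] at hexch hexch'
  constructor <;> linarith

end
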